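/- arXiv:2108.10609 — 2 statements merged into one kernel-verified Lean document; each statement's English description precedes it below -/
import Mathlib

section
/- Let A, B be positive semidefinite operators on a finite-dimensional Hilbert space and C a bounded operator. If C*AC ≤ λB for some λ > 0, then C B⁻¹ C* ≤ λ A⁻¹, where A⁻¹ and B⁻¹ denote the inverses restricted to the supports of A and B respectively (i.e., Moore–Penrose pseudoinverses). -/
/-!
Write `x = A u` and `v = B⁺ C* x`. Since `B⁺` is Hermitian (by uniqueness of the pseudoinverse),
`v* B v = x* C B⁺ C* x =: s`, and also `u* A (C v) = s`. The hypothesis gives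
`(C v)* A (C v) ≤ λ s`, so expanding `0 ≤ (C v - λ u)* A (C v - λ u)` yields
`λ s ≤ λ² u* A u = λ² x* A⁺ x`.
-/

open Matrix
open scoped ComplexOrder

/-- Penrose conditions characterizing the Moore–Penrose pseudoinverse. -/
def IsMoorePenrose {n : ℕ} (A Ap : Matrix (Fin n) (Fin n) ℂ) : Prop :=
  A * Ap * A = A ∧ Ap * A * Ap = Ap ∧ (A * Ap)ᴴ = A * Ap ∧ (Ap * A)ᴴ = Ap * A

namespace Matrix

variable {ι κ R : Type*} [Fintype ι] [Fintype κ]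

lemma star_dotProduct_conjTranspose_mul_mul_mulVec [CommSemiring R] [StarRing R]
    (M : Matrix κ κ R) (P : Matrix κ ι R) (y : ι → R) :
    star y ⬝ᵥ (Pᴴ * M * P) *ᵥ y = star (P *ᵥ y) ⬝ᵥ M *ᵥ (P *ᵥ y) := by
  simp only [star_mulVec, dotProduct_mulVec, vecMul_vecMul, Matrix.mul_assoc]

lemma IsHermitian.star_star_dotProduct_mulVec [CommSemiring R] [StarRing R]
    {A : Matrix ι ι R} (hA : A.IsHermitian) (u w : ι → R) :
    star (star u ⬝ᵥ A *ᵥ w) = star w ⬝ᵥ A *ᵥ u := by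
  rw [← star_dotProduct, star_mulVec, dotProduct_mulVec, hA.eq, dotProduct_comm]

variable {𝕜 : Type*} [RCLike 𝕜]

open RCLike in
lemma PosSemidef.re_dotProduct_mulVec_le_of_sub {M N : Matrix ι ι 𝕜}
    (h : (M - N).PosSemidef) (v : ι → 𝕜) :
    re (star v ⬝ᵥ N *ᵥ v) ≤ re (star v ⬝ᵥ M *ᵥ v) := by
  have := h.re_dotProduct_nonneg v
  rw [sub_mulVec, dotProduct_sub, map_sub] at this
  linarith

open RCLike in
lemma PosSemidef.two_mul_re_dotProduct_mulVec_le {A : Matrix ι ι 𝕜} (hA : A.PosSemidef)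
    (u w : ι → 𝕜) (l : ℝ) :
    2 * l * re (star u ⬝ᵥ A *ᵥ w) ≤
      re (star w ⬝ᵥ A *ᵥ w) + l ^ 2 * re (star u ⬝ᵥ A *ᵥ u) := by
  have h := hA.re_dotProduct_nonneg (w - (l : 𝕜) • u)
  have hsymm : re (star w ⬝ᵥ A *ᵥ u) = re (star u ⬝ᵥ A *ᵥ w) := by
    rw [← hA.isHermitian.star_star_dotProduct_mulVec, RCLike.star_def, conj_re]
  simp only [star_sub, star_smul, mulVec_sub, mulVec_smul, dotProduct_sub, sub_dotProduct,
    dotProduct_smul, smul_dotProduct, map_sub, smul_eq_mul, RCLike.star_def, conj_ofReal,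
    re_ofReal_mul, hsymm] at h
  nlinarith

end Matrix

namespace IsMoorePenrose

variable {n : ℕ} {A X Y : Matrix (Fin n) (Fin n) ℂ}

lemma conjTranspose (h : IsMoorePenrose A X) : IsMoorePenrose Aᴴ Xᴴ := by
  obtain ⟨h₁, h₂, h₃, h₄⟩ := h
  refine ⟨?_, ?_, ?_, ?_⟩
  · rw [← conjTranspose_mul, ← conjTranspose_mul, ← Matrix.mul_assoc, h₁]
  · rw [← conjTranspose_mul, ← conjTranspose_mul, ← Matrix.mul_assoc, h₂]
  · rw [← conjTranspose_mul, conjTranspose_conjTranspose, h₄]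
  · rw [← conjTranspose_mul, conjTranspose_conjTranspose, h₃]

lemma unique (hX : IsMoorePenrose A X) (hY : IsMoorePenrose A Y) : X = Y := by
  obtain ⟨x₁, x₂, x₃, x₄⟩ := hX
  obtain ⟨y₁, y₂, y₃, y₄⟩ := hY
  have hAX : A * X = A * Y := by
    calc A * X = (A * Y * A * X)ᴴ := by rw [y₁, x₃]
      _ = (A * X)ᴴ * (A * Y)ᴴ := by simp only [conjTranspose_mul, Matrix.mul_assoc]
      _ = A * Y := by rw [x₃, y₃, ← Matrix.mul_assoc, x₁]
  have hXA : X * A = Y * A := by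
    calc X * A = (X * A * Y * A)ᴴ := by rw [Matrix.mul_assoc X A Y, Matrix.mul_assoc, y₁, x₄]
      _ = (Y * A)ᴴ * (X * A)ᴴ := by simp only [conjTranspose_mul, Matrix.mul_assoc]
      _ = Y * A := by rw [x₄, y₄, Matrix.mul_assoc, ← Matrix.mul_assoc A, x₁]
  calc X = X * A * X := x₂.symm
    _ = Y * A * Y := by rw [Matrix.mul_assoc, hAX, ← Matrix.mul_assoc, hXA]
    _ = Y := y₂

lemma conjTranspose_eq_of_isHermitian (hA : A.IsHermitian) (h : IsMoorePenrose A X) :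
    Xᴴ = X := by
  have := h.conjTranspose
  rw [hA.eq] at this
  exact this.unique h

lemma conjTranspose_mul_mul_self (hA : A.IsHermitian) (h : IsMoorePenrose A X) :
    Xᴴ * A * X = X := by
  rw [h.conjTranspose_eq_of_isHermitian hA, h.2.1]

end IsMoorePenrose

/-- If `C* A C ≤ l • B` for positive semidefinite `A, B` and `l > 0`, then
`C B⁻¹ C* ≤ l • A⁻¹` as an inequality of quadratic forms on the range of `A`,
where the inverses are Moore–Penrose pseudoinverses. -/
theorem stmt0 {n : ℕ} (A B C Ainv Binv : Matrix (Fin n) (Fin n) ℂ)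
    (hA : A.PosSemidef) (hB : B.PosSemidef)
    (hAinv : IsMoorePenrose A Ainv) (hBinv : IsMoorePenrose B Binv)
    (l : ℝ) (hl : 0 < l)
    (h : (l • B - Cᴴ * A * C).PosSemidef) :
    ∀ x : Fin n → ℂ, x ∈ Set.range A.mulVec →
      0 ≤ ((star x) ⬝ᵥ (l • Ainv - C * Binv * Cᴴ).mulVec x).re := by
  rintro _ ⟨u, rfl⟩
  set x := A *ᵥ u
  set v := (Binv * Cᴴ) *ᵥ x
  set s := star x ⬝ᵥ (C * Binv * Cᴴ) *ᵥ x
  have hAinv_form : star x ⬝ᵥ Ainv *ᵥ x = star u ⬝ᵥ A *ᵥ u := by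
    rw [← star_dotProduct_conjTranspose_mul_mul_mulVec, hA.isHermitian.eq, hAinv.1]
  have hB_form : star v ⬝ᵥ B *ᵥ v = s := by
    rw [← star_dotProduct_conjTranspose_mul_mul_mulVec,
      show (Binv * Cᴴ)ᴴ * B * (Binv * Cᴴ) = C * (Binvᴴ * B * Binv) * Cᴴ by
        simp only [conjTranspose_mul, conjTranspose_conjTranspose, Matrix.mul_assoc],
      hBinv.conjTranspose_mul_mul_self hB.isHermitian]
  have hcross : star u ⬝ᵥ A *ᵥ (C *ᵥ v) = s := by
    simp only [s, x, v, star_mulVec, hA.isHermitian.eq, dotProduct_mulVec, vecMul_vecMul,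
      mulVec_mulVec, Matrix.mul_assoc]
  have hbound := h.re_dotProduct_mulVec_le_of_sub v
  rw [star_dotProduct_conjTranspose_mul_mul_mulVec, smul_mulVec, dotProduct_smul, hB_form]
    at hbound
  have hsquare := hA.two_mul_re_dotProduct_mulVec_le u (C *ᵥ v) l
  rw [hcross] at hsquare
  rw [sub_mulVec, dotProduct_sub, smul_mulVec, dotProduct_smul, hAinv_form]
  simp only [RCLike.re_to_complex, Complex.real_smul, Complex.re_ofReal_mul, Complex.sub_re]
    at hbound hsquare ⊢
  have hs : s.re ≤ l * (star u ⬝ᵥ A *ᵥ u).re := by nlinarith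
  linarith
end

section
/- Let P(x) = ∑_{α∈I} λ_α σ_α x σ_α be a Pauli channel on 2ⁿ×2ⁿ matrices, where each σ_α is a self-adjoint unitary, the σ_α pairwise commute or anticommute, the λ_α are positive and sum to 1, σ_{0} = identity with 0 ∈ I. Then for each β ∈ I and every x, ‖[σ_β, P(x)]‖ ≤ (1 − 2 min{λ_0, λ_β}) ‖[σ_β, x]‖, and consequently max_{β∈I} ‖[σ_β, P(x)]‖ ≤ (1 − 2 min_{β∈I} λ_β) max_{β∈I} ‖[σ_β, x]‖. -/
/-!
Conjugation by `σ_α` turns `[σ_β, x]` into `[σ_β, σ_α x σ_α] = ± σ_α [σ_β, x] σ_α`, which has the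
same norm because `σ_α` is unitary. In `[σ_β, P x] = ∑ λ_α [σ_β, σ_α x σ_α]` the terms `α = 0`
and `α = β` are exactly `λ_0 [σ_β, x]` and `-λ_β [σ_β, x]`; merging them before the triangle
inequality gives the factor `|λ_0 - λ_β| + ∑_{α ≠ 0, β} λ_α = 1 - 2 min(λ_0, λ_β)`. For the
maxima, `min_α λ_α ≤ 1/2` as soon as there are two indices.
-/

open Finset

-- Instances are found only for `ℂ`-scalars, but the weights `λ_α` act as real scalars.
instance ContinuousLinearMap.isScalarTower_real {E : Type*} [NormedAddCommGroup E]
    [NormedSpace ℂ E] : IsScalarTower ℝ (E →L[ℂ] E) (E →L[ℂ] E) :=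
  ⟨fun _ _ _ => rfl⟩

instance ContinuousLinearMap.smulCommClass_real {E : Type*} [NormedAddCommGroup E]
    [NormedSpace ℂ E] : SMulCommClass ℝ (E →L[ℂ] E) (E →L[ℂ] E) :=
  ⟨fun r f g => (ContinuousLinearMap.comp_smul f r g).symm⟩

theorem norm_sum_smul_le_of_antipodal_pair {E : Type*} [SeminormedAddCommGroup E]
    [NormedSpace ℝ E] {ι : Type*} [Fintype ι] {o β : ι} (hoβ : o ≠ β) {lam : ι → ℝ}
    (hlam : ∀ α, 0 ≤ lam α) (hsum : ∑ α, lam α = 1) {f : ι → E} {d : E}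
    (ho : f o = d) (hβ : f β = -d) (hf : ∀ α, ‖f α‖ ≤ ‖d‖) :
    ‖∑ α, lam α • f α‖ ≤ (1 - 2 * min (lam o) (lam β)) * ‖d‖ := by
  classical
  set rest := (univ.erase o).erase β
  have hβ_mem : β ∈ univ.erase o := mem_erase.2 ⟨hoβ.symm, mem_univ β⟩
  have hrest : ‖∑ α ∈ rest, lam α • f α‖ ≤ (1 - lam o - lam β) * ‖d‖ := by
    have hlam_rest : ∑ α ∈ rest, lam α = 1 - lam o - lam β := by
      rw [sum_erase_eq_sub hβ_mem, sum_erase_eq_sub (mem_univ o), hsum]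
    calc ‖∑ α ∈ rest, lam α • f α‖ ≤ ∑ α ∈ rest, lam α * ‖f α‖ := by
          refine (norm_sum_le _ _).trans (sum_le_sum fun α _ => ?_)
          rw [norm_smul, Real.norm_of_nonneg (hlam α)]
      _ ≤ ∑ α ∈ rest, lam α * ‖d‖ :=
          sum_le_sum fun α _ => mul_le_mul_of_nonneg_left (hf α) (hlam α)
      _ = (1 - lam o - lam β) * ‖d‖ := by rw [← sum_mul, hlam_rest]
  calc ‖∑ α, lam α • f α‖ = ‖(lam o - lam β) • d + ∑ α ∈ rest, lam α • f α‖ := by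
        rw [← add_sum_erase _ _ (mem_univ o), ← add_sum_erase _ _ hβ_mem, ho, hβ, sub_smul,
          smul_neg, sub_eq_add_neg, add_assoc]
    _ ≤ |lam o - lam β| * ‖d‖ + (1 - lam o - lam β) * ‖d‖ := by
        rw [← Real.norm_eq_abs, ← norm_smul]
        exact (norm_add_le _ _).trans (add_le_add_right hrest _)
    _ = (1 - 2 * min (lam o) (lam β)) * ‖d‖ := by
        rw [← max_sub_min_eq_abs', ← add_mul]
        congr 1
        linarith [min_add_max (lam o) (lam β)]

theorem two_mul_iInf_le_one {ι : Type*} [Fintype ι] [Nontrivial ι] {lam : ι → ℝ}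
    (hlam : ∀ α, 0 ≤ lam α) (hsum : ∑ α, lam α = 1) : 2 * ⨅ α, lam α ≤ 1 := by
  classical
  obtain ⟨a, b, hab⟩ := exists_pair_ne ι
  have hpair : lam a + lam b ≤ ∑ α, lam α := by
    rw [← sum_pair hab]
    exact sum_le_sum_of_subset_of_nonneg (subset_univ _) fun α _ _ => hlam α
  linarith [ciInf_le (Finite.bddBelow_range lam) a, ciInf_le (Finite.bddBelow_range lam) b]

section Commutator

variable {R A : Type*} [Monoid R] [Ring A] [DistribMulAction R A] [IsScalarTower R A A]
  [SMulCommClass R A A]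

theorem commutator_sum_smul {ι : Type*} (s : Finset ι) (c : ι → R) (v : A) (y : ι → A) :
    v * (∑ α ∈ s, c α • y α) - (∑ α ∈ s, c α • y α) * v
      = ∑ α ∈ s, c α • (v * y α - y α * v) := by
  simp only [mul_sum, sum_mul, mul_smul_comm, smul_mul_assoc, smul_sub, sum_sub_distrib]

theorem commutator_conj_eq_smul {u v : A} (x : A) {s : R} (hu : u * u = 1)
    (huv : u * v = s • (v * u)) :
    v * (u * x * u) - u * x * u * v = s • (u * (v * x - x * v) * u) := by
  have hvu : v * u = s • (u * v) := by
    calc v * u = u * (u * v) * u := by rw [← mul_assoc, hu, one_mul]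
      _ = s • (u * (v * u) * u) := by rw [huv, mul_smul_comm, smul_mul_assoc]
      _ = s • (u * v) := by simp only [mul_assoc, hu, mul_one]
  calc v * (u * x * u) - u * x * u * v = (v * u) * x * u - u * x * (u * v) := by noncomm_ring
    _ = (s • (u * v)) * x * u - u * x * (s • (v * u)) := by rw [← hvu, ← huv]
    _ = s • (u * (v * x - x * v) * u) := by
        simp only [smul_mul_assoc, mul_smul_comm, mul_sub, sub_mul, smul_sub, mul_assoc]

theorem commutator_conj_self_eq_neg {u : A} (x : A) (hu : u * u = 1) :
    u * (u * x * u) - u * x * u * u = -(u * x - x * u) := by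
  calc u * (u * x * u) - u * x * u * u = (u * u) * x * u - u * x * (u * u) := by noncomm_ring
    _ = _ := by rw [hu]; noncomm_ring

end Commutator

def pauliChannel {A ι : Type*} [Ring A] [Module ℝ A] [Fintype ι] (lam : ι → ℝ) (σ : ι → A)
    (x : A) : A :=
  ∑ α, lam α • (σ α * x * σ α)

section PauliChannel

variable {A : Type*} [NormedRing A] [StarRing A] [CStarRing A] [NormedSpace ℝ A]
  [IsScalarTower ℝ A A] [SMulCommClass ℝ A A] {ι : Type*} [Fintype ι]

theorem norm_commutator_conj_eq {u v : A} (x : A) {s : ℝ} (hu : IsSelfAdjoint u)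
    (hu_sq : u * u = 1) (hs : |s| = 1) (huv : u * v = s • (v * u)) :
    ‖v * (u * x * u) - u * x * u * v‖ = ‖v * x - x * v‖ := by
  have hU : u ∈ unitary A := by
    rw [Unitary.mem_iff, hu.star_eq]
    exact ⟨hu_sq, hu_sq⟩
  rw [commutator_conj_eq_smul x hu_sq huv, norm_smul, Real.norm_eq_abs, hs, one_mul,
    CStarRing.norm_mul_mem_unitary _ hU, CStarRing.norm_mem_unitary_mul _ hU]

theorem norm_commutator_pauliChannel_le (σ : ι → A) (o β : ι) (hσo : σ o = 1)
    (hsa : ∀ α, IsSelfAdjoint (σ α)) (hsq : ∀ α, σ α * σ α = 1) (s : ι → ℝ)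
    (hs : ∀ α, |s α| = 1) (hcomm : ∀ α, σ α * σ β = s α • (σ β * σ α)) {lam : ι → ℝ}
    (hlam : ∀ α, 0 ≤ lam α) (hsum : ∑ α, lam α = 1) (x : A) :
    ‖σ β * pauliChannel lam σ x - pauliChannel lam σ x * σ β‖
      ≤ (1 - 2 * min (lam o) (lam β)) * ‖σ β * x - x * σ β‖ := by
  obtain rfl | hoβ := eq_or_ne o β
  · simp [hσo]
  rw [pauliChannel, commutator_sum_smul]
  refine norm_sum_smul_le_of_antipodal_pair hoβ hlam hsum ?_ ?_ fun α => ?_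
  · simp [hσo]
  · exact commutator_conj_self_eq_neg x (hsq β)
  · exact (norm_commutator_conj_eq x (hsa α) (hsq α) (hs α) (hcomm α)).le

end PauliChannel

/-- Lipschitz contraction for Pauli channels: for `P(x) = ∑_α λ_α σ_α x σ_α` with
self-adjoint unitary, pairwise commuting-or-anticommuting `σ_α`, `σ_0 = 1`, and
positive weights summing to one, one has
`‖[σ_β, P x]‖ ≤ (1 - 2 min(λ_0, λ_β)) ‖[σ_β, x]‖` for each `β`, and hence
`max_β ‖[σ_β, P x]‖ ≤ (1 - 2 min_β λ_β) max_β ‖[σ_β, x]‖`. -/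
theorem stmt11 {m : ℕ} {ι : Type*} [Fintype ι] (o : ι)
    (σ : ι → (EuclideanSpace ℂ (Fin m) →L[ℂ] EuclideanSpace ℂ (Fin m)))
    (hσo : σ o = 1)
    (hsa : ∀ α, IsSelfAdjoint (σ α))
    (hunit : ∀ α, σ α * σ α = 1)
    (s : ι → ι → ℝ) (hs : ∀ α β, s α β = 1 ∨ s α β = -1)
    (hcomm : ∀ α β, σ α * σ β = s α β • (σ β * σ α))
    (lam : ι → ℝ) (hlam : ∀ α, 0 < lam α) (hlamsum : ∑ α, lam α = 1)
    (P : (EuclideanSpace ℂ (Fin m) →L[ℂ] EuclideanSpace ℂ (Fin m)) →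
         (EuclideanSpace ℂ (Fin m) →L[ℂ] EuclideanSpace ℂ (Fin m)))
    (hP : ∀ x, P x = ∑ α, lam α • (σ α * x * σ α)) :
    (∀ β x, ‖σ β * P x - P x * σ β‖
        ≤ (1 - 2 * min (lam o) (lam β)) * ‖σ β * x - x * σ β‖) ∧
    (∀ x, (⨆ β, ‖σ β * P x - P x * σ β‖)
        ≤ (1 - 2 * ⨅ β, lam β) * ⨆ β, ‖σ β * x - x * σ β‖) := by
  have hlam₀ : ∀ α, 0 ≤ lam α := fun α => (hlam α).le
  have hcontr : ∀ β x, ‖σ β * P x - P x * σ β‖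
      ≤ (1 - 2 * min (lam o) (lam β)) * ‖σ β * x - x * σ β‖ := fun β x => by
    rw [hP]
    exact norm_commutator_pauliChannel_le σ o β hσo hsa hunit (s · β)
      (fun α => (abs_eq zero_le_one).2 (hs α β)) (hcomm · β) hlam₀ hlamsum x
  refine ⟨hcontr, fun x => ?_⟩
  rcases subsingleton_or_nontrivial ι with hι | hι
  · have hσ1 : ∀ β, σ β = 1 := fun β => by rw [Subsingleton.elim β o, hσo]
    simp [hσ1]
  have hinf := two_mul_iInf_le_one hlam₀ hlamsum
  refine ciSup_le fun β => (hcontr β x).trans (mul_le_mul ?_ ?_ (norm_nonneg _) (by linarith))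
  · linarith [le_min (ciInf_le (Finite.bddBelow_range lam) o)
      (ciInf_le (Finite.bddBelow_range lam) β)]
  · exact le_ciSup (Finite.bddAbove_range fun β => ‖σ β * x - x * σ β‖) β
end
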